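/- Let d ∈ ℕ, α > 0, let γ_u > 0 for each subset u ⊆ {1,…,d}, let λ ∈ (0, α), let n ≥ 2 be a natural number, and let z ∈ ℤ^d be such that for every p ∈ P_n the componentwise reduction z mod p lies in G^{(p)} = { w ∈ {0,…,p−1}^d : Σ_{h ∈ ℤ^d∖{0}, h·w ≡ 0 (mod p)} r_{α,γ}(h)^{−1/λ} ≤ (4/p)·μ_λ }. Then sup_{h ∈ ℤ^d∖{0}} ω_z(h) · r_{α,γ}(h)^{−2} ≤ n^{−2λ} · (8·μ_λ)^{2λ}. -/

import Mathlib

open scoped BigOperators Classical ENNReal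
open MeasureTheory

noncomputable def rfun (d : ℕ) (α : ℝ) (γ : Finset (Fin d) → ℝ) (h : Fin d → ℤ) : ℝ :=
  (γ (Finset.univ.filter fun j => h j ≠ 0))⁻¹ *
    ∏ j ∈ Finset.univ.filter fun j => h j ≠ 0, |(h j : ℝ)| ^ α

/-- `μ_λ = Σ_{h ∈ ℤ^d \ {0}} r_{α,γ}(h)^(-1/λ)`. -/
noncomputable def mu (d : ℕ) (α : ℝ) (γ : Finset (Fin d) → ℝ) (lam : ℝ) : ℝ :=
  ∑' h : {h : Fin d → ℤ // h ≠ 0}, rfun d α γ h.1 ^ (-1 / lam)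

/-- `P_n = { p prime : n/2 < p ≤ n }`. -/
def Pset (n : ℕ) : Finset ℕ := (Finset.range (n + 1)).filter fun p => p.Prime ∧ n < 2 * p

/-- The good set `G^{(p)}` of generating vectors in `{0,...,p-1}^d`. -/
noncomputable def Gset (d : ℕ) (α : ℝ) (γ : Finset (Fin d) → ℝ) (lam : ℝ) (p : ℕ) :
    Finset (Fin d → Fin p) :=
  Finset.univ.filter fun z =>
    (∑' h : {h : Fin d → ℤ // h ≠ 0 ∧ (p : ℤ) ∣ ∑ j, h j * ((z j : ℕ) : ℤ)},
      rfun d α γ h.1 ^ (-1 / lam)) ≤ 4 / p * mu d α γ lam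

/-- `ω_z(h) = (1/|P_n|) Σ_{p ∈ P_n} 𝟙(h·z ≡ 0 mod p)`. -/
noncomputable def omegaZ (d n : ℕ) (z : Fin d → ℤ) (h : Fin d → ℤ) : ℝ :=
  (1 / ((Pset n).card : ℝ)) * ∑ p ∈ Pset n, if (p : ℤ) ∣ ∑ j, h j * z j then 1 else 0

lemma rfun_pos (d : ℕ) (α : ℝ) (γ : Finset (Fin d) → ℝ) (hγ : ∀ u, 0 < γ u)
    (h : Fin d → ℤ) : 0 < rfun d α γ h := by
  refine mul_pos (inv_pos.mpr (hγ _)) (Finset.prod_pos fun j hj => ?_)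
  simp only [Finset.mem_filter] at hj
  exact Real.rpow_pos_of_pos (abs_pos.mpr (by exact_mod_cast hj.2)) _

lemma summable_gfun {β : ℝ} (hβ : 1 < β) :
    Summable (fun k : ℤ => if k = 0 then (1:ℝ) else |(k:ℝ)| ^ (-β)) := by
  have h1 := Real.summable_abs_int_rpow hβ
  have h2 : Summable (fun k : ℤ => if k = 0 then (1:ℝ) else 0) :=
    summable_of_ne_finset_zero (s := {0}) (by intro b hb; simp at hb; simp [hb])
  refine (h1.add h2).congr fun k => ?_
  by_cases hk : k = 0
  · simp [hk, Real.zero_rpow (by linarith : -β ≠ 0)]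
  · simp [hk]

lemma summable_pi_prod {g : ℤ → ℝ} (hg : Summable g) (h0 : ∀ k, 0 ≤ g k) (d : ℕ) :
    Summable (fun v : Fin d → ℤ => ∏ j, g (v j)) := by
  induction d with
  | zero =>
      refine summable_of_ne_finset_zero (s := {0}) fun b hb => ?_
      have hb0 : b = 0 := funext fun j => j.elim0
      simp [hb0] at hb
  | succ d ih =>
      have h2 : Summable (fun p : ℤ × (Fin d → ℤ) => g p.1 * ∏ j, g (p.2 j)) := by
        apply Summable.mul_of_nonneg hg ih
        · exact h0
        · exact fun v => Finset.prod_nonneg fun j _ => h0 _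
      have h3 := (Fin.consEquiv fun _ : Fin (d+1) => ℤ).symm.summable_iff.mpr h2
      refine h3.congr fun v => ?_
      rw [Fin.prod_univ_succ]
      rfl

lemma rfun_rpow_eq (d : ℕ) {α lam : ℝ} (γ : Finset (Fin d) → ℝ)
    (hγ : ∀ u, 0 < γ u) (h : Fin d → ℤ) :
    rfun d α γ h ^ (-1 / lam)
      = γ (Finset.univ.filter fun j => h j ≠ 0) ^ (1 / lam) *
        ∏ j, (if h j = 0 then (1:ℝ) else |(h j : ℝ)| ^ (-(α / lam))) := by
  set u := Finset.univ.filter fun j => h j ≠ 0 with hu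
  have hprod0 : ∀ j ∈ u, (0:ℝ) ≤ |(h j : ℝ)| ^ α := fun j _ => Real.rpow_nonneg (abs_nonneg _) _
  rw [rfun, Real.mul_rpow (inv_pos.mpr (hγ u)).le (Finset.prod_nonneg hprod0),
    Real.inv_rpow (hγ u).le, neg_div, Real.rpow_neg (hγ u).le, inv_inv,
    ← Real.finset_prod_rpow u _ hprod0]
  congr 1
  calc ∏ j ∈ u, (|(h j : ℝ)| ^ α) ^ (-(1 / lam))
      = ∏ j ∈ u, |(h j : ℝ)| ^ (-(α / lam)) := by
        refine Finset.prod_congr rfl fun j _ => ?_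
        rw [← Real.rpow_mul (abs_nonneg _)]
        congr 1
        ring
    _ = ∏ j, (if h j ≠ 0 then |(h j : ℝ)| ^ (-(α / lam)) else 1) := Finset.prod_filter _ _
    _ = ∏ j, (if h j = 0 then (1:ℝ) else |(h j : ℝ)| ^ (-(α / lam))) := by
        refine Finset.prod_congr rfl fun j _ => ?_
        rw [ite_not]

lemma summable_rfun (d : ℕ) {α lam : ℝ} (γ : Finset (Fin d) → ℝ)
    (hγ : ∀ u, 0 < γ u) (hlam : lam ∈ Set.Ioo 0 α) :
    Summable (fun h : Fin d → ℤ => rfun d α γ h ^ (-1 / lam)) := by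
  obtain ⟨hl0, hlα⟩ := hlam
  have hβ1 : 1 < α / lam := (one_lt_div hl0).mpr hlα
  set g : ℤ → ℝ := fun k => if k = 0 then (1:ℝ) else |(k:ℝ)| ^ (-(α / lam)) with hg
  have hg0 : ∀ k, 0 ≤ g k := fun k => by
    rw [hg]; dsimp only; split
    · norm_num
    · exact Real.rpow_nonneg (abs_nonneg _) _
  have hgs : Summable g := summable_gfun hβ1
  set C : ℝ := ∑ u : Finset (Fin d), γ u ^ (1 / lam) with hC
  refine Summable.of_nonneg_of_le
    (fun h => Real.rpow_nonneg (rfun_pos d α γ hγ h).le _)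
    (fun h => ?_) ((summable_pi_prod hgs hg0 d).mul_left C)
  rw [rfun_rpow_eq d γ hγ h]
  refine mul_le_mul_of_nonneg_right ?_ (Finset.prod_nonneg fun j _ => hg0 _)
  exact Finset.single_le_sum (fun u _ => Real.rpow_nonneg (hγ u).le _) (Finset.mem_univ _)

theorem stmt9 (d : ℕ) (α : ℝ) (hα : 0 < α) (γ : Finset (Fin d) → ℝ)
    (hγ : ∀ u, 0 < γ u) (lam : ℝ) (hlam : lam ∈ Set.Ioo 0 α) (n : ℕ) (hn : 2 ≤ n)
    (z : Fin d → ℤ)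
    (hz : ∀ p ∈ Pset n, ∃ w ∈ Gset d α γ lam p, ∀ j, (p : ℤ) ∣ (z j - ((w j : ℕ) : ℤ))) :
    (⨆ h : {h : Fin d → ℤ // h ≠ 0}, omegaZ d n z h.1 * rfun d α γ h.1 ^ (-2 : ℝ))
      ≤ (n : ℝ) ^ (-(2 * lam)) * (8 * mu d α γ lam) ^ (2 * lam) := by
  obtain ⟨hl0, hlα⟩ := hlam
  have hn0 : (0:ℝ) < n := by positivity
  have hnn : (2:ℝ) ≤ n := by exact_mod_cast hn
  have hsum : Summable (fun h : Fin d → ℤ => rfun d α γ h ^ (-1 / lam)) :=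
    summable_rfun d γ hγ ⟨hl0, hlα⟩
  have hμ0 : 0 ≤ mu d α γ lam :=
    tsum_nonneg fun h => Real.rpow_nonneg (rfun_pos d α γ hγ h.1).le _
  have hRHS : 0 ≤ (n : ℝ) ^ (-(2 * lam)) * (8 * mu d α γ lam) ^ (2 * lam) :=
    mul_nonneg (Real.rpow_nonneg hn0.le _) (Real.rpow_nonneg (by linarith) _)
  refine Real.iSup_le ?_ hRHS
  rintro ⟨h, hh⟩
  by_cases hex : ∃ p ∈ Pset n, (p:ℤ) ∣ ∑ j, h j * z j
  · obtain ⟨p, hpP, hpd⟩ := hex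
    have hpfacts : p.Prime ∧ n < 2 * p ∧ p ≤ n := by
      have := hpP
      simp only [Pset, Finset.mem_filter, Finset.mem_range] at this
      exact ⟨this.2.1, this.2.2, by omega⟩
    have hp0 : (0:ℝ) < p := by
      have := hpfacts.1.pos; positivity
    obtain ⟨w, hwG, hwz⟩ := hz p hpP
    have hdiff : (p:ℤ) ∣ ∑ j, h j * (z j - ((w j : ℕ) : ℤ)) :=
      Finset.dvd_sum fun j _ => Dvd.dvd.mul_left (hwz j) _
    have hdw : (p:ℤ) ∣ ∑ j, h j * ((w j : ℕ) : ℤ) := by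
      have heq : ∑ j, h j * ((w j : ℕ) : ℤ)
          = (∑ j, h j * z j) - ∑ j, h j * (z j - ((w j : ℕ) : ℤ)) := by
        rw [← Finset.sum_sub_distrib]
        exact Finset.sum_congr rfl fun j _ => by ring
      rw [heq]
      exact dvd_sub hpd hdiff
    have hG : (∑' x : {h : Fin d → ℤ // h ≠ 0 ∧ (p:ℤ) ∣ ∑ j, h j * ((w j : ℕ) : ℤ)},
        rfun d α γ x.1 ^ (-1 / lam)) ≤ 4 / p * mu d α γ lam := by
      simpa [Gset, Finset.mem_filter] using hwG
    have hsum' : Summable (fun x : {h : Fin d → ℤ // h ≠ 0 ∧ (p:ℤ) ∣ ∑ j, h j * ((w j : ℕ) : ℤ)} =>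
        rfun d α γ x.1 ^ (-1 / lam)) :=
      hsum.subtype {h : Fin d → ℤ | h ≠ 0 ∧ (p:ℤ) ∣ ∑ j, h j * ((w j : ℕ) : ℤ)}
    have hterm : rfun d α γ h ^ (-1 / lam) ≤ 4 / p * mu d α γ lam :=
      le_trans (Summable.le_tsum hsum' ⟨h, hh, hdw⟩
        (fun _ _ => Real.rpow_nonneg (rfun_pos d α γ hγ _).le _)) hG
    have hfrac : (4:ℝ) / p ≤ 8 / n := by
      rw [div_le_div_iff₀ hp0 hn0]
      have : (n:ℝ) < 2 * p := by exact_mod_cast hpfacts.2.1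
      linarith
    have hr : rfun d α γ h ^ (-1 / lam) ≤ 8 * mu d α γ lam / n := by
      calc rfun d α γ h ^ (-1 / lam) ≤ 4 / p * mu d α γ lam := hterm
        _ ≤ 8 / n * mu d α γ lam := mul_le_mul_of_nonneg_right hfrac hμ0
        _ = 8 * mu d α γ lam / n := by ring
    have hrpos := rfun_pos d α γ hγ h
    have hA : (rfun d α γ h ^ (-1 / lam)) ^ (2 * lam) ≤ (8 * mu d α γ lam / n) ^ (2 * lam) :=
      Real.rpow_le_rpow (Real.rpow_nonneg hrpos.le _) hr (by positivity)
    have hL : (rfun d α γ h ^ (-1 / lam)) ^ (2 * lam) = rfun d α γ h ^ (-2 : ℝ) := by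
      rw [← Real.rpow_mul hrpos.le]
      congr 1
      field_simp
    have hRform : (8 * mu d α γ lam / n) ^ (2 * lam)
        = (n : ℝ) ^ (-(2 * lam)) * (8 * mu d α γ lam) ^ (2 * lam) := by
      rw [Real.div_rpow (by linarith) hn0.le, Real.rpow_neg hn0.le]
      ring
    have hkey : rfun d α γ h ^ (-2 : ℝ)
        ≤ (n : ℝ) ^ (-(2 * lam)) * (8 * mu d α γ lam) ^ (2 * lam) := by
      rw [← hL, ← hRform]; exact hA
    have hω1 : omegaZ d n z h ≤ 1 := by
      have hc : (0:ℝ) < (Pset n).card := by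
        have := Finset.card_pos.mpr ⟨p, hpP⟩
        positivity
      have hS : (∑ q ∈ Pset n, if (q:ℤ) ∣ ∑ j, h j * z j then (1:ℝ) else 0)
          ≤ ((Pset n).card : ℝ) := by
        calc (∑ q ∈ Pset n, if (q:ℤ) ∣ ∑ j, h j * z j then (1:ℝ) else 0)
            ≤ ∑ q ∈ Pset n, (1:ℝ) := Finset.sum_le_sum fun q _ => by split <;> norm_num
          _ = ((Pset n).card : ℝ) := by simp
      calc omegaZ d n z h ≤ (1 / ((Pset n).card : ℝ)) * ((Pset n).card : ℝ) :=
            mul_le_mul_of_nonneg_left hS (by positivity)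
        _ = 1 := by field_simp
    have hω0 : 0 ≤ omegaZ d n z h := by
      refine mul_nonneg (by positivity) (Finset.sum_nonneg fun q _ => by split <;> norm_num)
    calc omegaZ d n z h * rfun d α γ h ^ (-2 : ℝ)
        ≤ 1 * rfun d α γ h ^ (-2 : ℝ) :=
          mul_le_mul_of_nonneg_right hω1 (Real.rpow_nonneg hrpos.le _)
      _ = rfun d α γ h ^ (-2 : ℝ) := one_mul _
      _ ≤ _ := hkey
  · have hω : omegaZ d n z h = 0 := by
      rw [omegaZ, Finset.sum_eq_zero, mul_zero]
      intro q hq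
      rw [if_neg]
      exact fun hd => hex ⟨q, hq, hd⟩
    rw [hω, zero_mul]
    exact hRHS
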